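/- For every integer n ≥ 3, the cycle C_n is diametrical (i.e. Γ_b(C_n) = diam(C_n)) if and only if n = 3, n = 4, or n = 5. -/

import Mathlib

open SimpleGraph Finset

/-- `S` is a dominating set of `G`: every vertex is in `S` or adjacent to a vertex of `S`. -/
def Dominates {V : Type*} (G : SimpleGraph V) (S : Finset V) : Prop :=
  ∀ v : V, v ∈ S ∨ ∃ u ∈ S, G.Adj v u

/-- `S` is a minimal dominating set: it dominates and no proper subset dominates. -/
def MinimalDominating {V : Type*} (G : SimpleGraph V) (S : Finset V) : Prop :=
  Dominates G S ∧ ∀ S' : Finset V, S' ⊂ S → ¬ Dominates G S'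

/-- The upper domination number `Γ(G)`: maximum cardinality of a minimal dominating set. -/
noncomputable def upperDomination {V : Type*} (G : SimpleGraph V) : ℕ :=
  sSup {k : ℕ | ∃ S : Finset V, MinimalDominating G S ∧ S.card = k}

/-- The domination number `γ(G)`: minimum cardinality of a dominating set. -/
noncomputable def domNumber {V : Type*} (G : SimpleGraph V) : ℕ :=
  sInf {k : ℕ | ∃ S : Finset V, Dominates G S ∧ S.card = k}

/-- The eccentricity of `v` : maximum distance to any other vertex. -/
noncomputable def eccent {V : Type*} [Fintype V] (G : SimpleGraph V) (v : V) : ℕ :=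
  Finset.univ.sup (fun u => G.dist v u)

/-- The diameter of `G` : maximum eccentricity. -/
noncomputable def gDiam {V : Type*} [Fintype V] (G : SimpleGraph V) : ℕ :=
  Finset.univ.sup (fun v => eccent G v)

/-- A broadcast on `G`: `f v ≤ e(v)` for all `v`. -/
def IsBroadcast {V : Type*} [Fintype V] (G : SimpleGraph V) (f : V → ℕ) : Prop :=
  ∀ v : V, f v ≤ _root_.eccent G v

/-- A broadcast `f` dominates `G` if every vertex hears some broadcasting vertex. -/
def BroadcastDominates {V : Type*} (G : SimpleGraph V) (f : V → ℕ) : Prop :=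
  ∀ u : V, ∃ v : V, 1 ≤ f v ∧ G.dist u v ≤ f v

/-- A minimal dominating broadcast: no broadcast `g ≤ f` with `g ≠ f` dominates `G`. -/
def MinimalDominatingBroadcast {V : Type*} [Fintype V] (G : SimpleGraph V) (f : V → ℕ) : Prop :=
  IsBroadcast G f ∧ BroadcastDominates G f ∧
    ∀ g : V → ℕ, IsBroadcast G g → g ≤ f → g ≠ f → ¬ BroadcastDominates G g

/-- The cost of a broadcast. -/
def cost {V : Type*} [Fintype V] (f : V → ℕ) : ℕ := ∑ v, f v

/-- The upper broadcast domination number `Γ_b(G)`. -/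
noncomputable def upperBroadcast {V : Type*} [Fintype V] (G : SimpleGraph V) : ℕ :=
  sSup {k : ℕ | ∃ f : V → ℕ, MinimalDominatingBroadcast G f ∧ cost f = k}

/-- The broadcast domination number `γ_b(G)`. -/
noncomputable def broadcastDomNumber {V : Type*} [Fintype V] (G : SimpleGraph V) : ℕ :=
  sInf {k : ℕ | ∃ f : V → ℕ, IsBroadcast G f ∧ BroadcastDominates G f ∧ cost f = k}

/-!
The diameter of `C_n` is `⌊n/2⌋`, and in any graph a single vertex broadcasting at its
eccentricity is a minimal dominating broadcast, so `diam G ≤ Γ_b(G)` and `G` is diametrical iff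
no minimal dominating broadcast costs more than `diam G`.

For `n ≥ 6`, two vertices at distance one (`n` even) or two (`n` odd), each broadcasting with
strength `⌊n/2⌋ - 1`, dominate `C_n`, and each has a private boundary vertex on the far side of
the cycle, so this broadcast is minimal; its cost `2⌊n/2⌋ - 2` exceeds `⌊n/2⌋`.

For `n ≤ 5`, a minimal dominating broadcast in which some vertex broadcasts at strength `⌊n/2⌋`
consists of that vertex alone; otherwise `n ∈ {4, 5}` and it is a minimal dominating set, which
in `C_4` and `C_5` has at most two vertices.
-/

open Function

section Broadcast

variable {V : Type*} [Fintype V] {G : SimpleGraph V}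

lemma dist_le_eccent (G : SimpleGraph V) (u v : V) : G.dist u v ≤ _root_.eccent G v := by
  rw [SimpleGraph.dist_comm]
  exact le_sup (f := fun u => G.dist v u) (mem_univ u)

lemma exists_dist_eq_eccent (G : SimpleGraph V) (v : V) : ∃ u, G.dist u v = _root_.eccent G v := by
  obtain ⟨u, -, hu⟩ := exists_mem_eq_sup univ ⟨v, mem_univ v⟩ (fun u => G.dist v u)
  exact ⟨u, by rw [SimpleGraph.dist_comm, _root_.eccent, hu]⟩

lemma cost_le_sum_eccent {f : V → ℕ} (hf : IsBroadcast G f) : cost f ≤ ∑ v, _root_.eccent G v :=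
  sum_le_sum fun v _ => hf v

lemma cost_le_card_of_le_one {f : V → ℕ} (hf : ∀ v, f v ≤ 1) : cost f ≤ #{v | 1 ≤ f v} := by
  rw [card_filter]
  exact sum_le_sum fun v _ => by have := hf v; split_ifs <;> omega

lemma cost_add (f g : V → ℕ) : cost (f + g) = cost f + cost g :=
  sum_add_distrib

lemma cost_pi_single [DecidableEq V] (v : V) (a : ℕ) : cost (Pi.single v a) = a := by
  simp [cost, sum_pi_single']

namespace MinimalDominatingBroadcast

variable {f : V → ℕ}

lemma eq_of_le (hf : MinimalDominatingBroadcast G f) {g : V → ℕ} (hg : IsBroadcast G g)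
    (hgf : g ≤ f) (hdom : BroadcastDominates G g) : g = f :=
  by_contra fun hne => hf.2.2 g hg hgf hne hdom

lemma not_dominates_update_zero [DecidableEq V] (hf : MinimalDominatingBroadcast G f) {z : V}
    (hz : 1 ≤ f z) : ¬ BroadcastDominates G (update f z 0) := by
  have hle : update f z 0 ≤ f := fun v => by
    rcases eq_or_ne v z with rfl | hv <;> simp [*]
  intro hdom
  have := congrFun (hf.eq_of_le (fun v => (hle v).trans (hf.1 v)) hle hdom) z
  simp at this
  omega

/-- A vertex broadcasting at its eccentricity is heard everywhere on its own. -/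
lemma cost_eq_eccent [DecidableEq V] (hf : MinimalDominatingBroadcast G f) {v : V}
    (hv : 1 ≤ _root_.eccent G v) (hfv : _root_.eccent G v ≤ f v) :
    cost f = _root_.eccent G v := by
  have hle : Pi.single v (_root_.eccent G v) ≤ f := fun w => by
    rcases eq_or_ne w v with rfl | hw <;> simp [*]
  have hdom : BroadcastDominates G (Pi.single v (_root_.eccent G v)) :=
    fun u => ⟨v, by simpa using hv, by simpa using dist_le_eccent G u v⟩
  rw [← hf.eq_of_le (fun w => (hle w).trans (hf.1 w)) hle hdom, cost_pi_single]

end MinimalDominatingBroadcast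

lemma minimalDominatingBroadcast_of_private_boundary {f : V → ℕ} (hb : IsBroadcast G f)
    (hd : BroadcastDominates G f)
    (hpriv : ∀ v, 1 ≤ f v → ∃ u, G.dist u v = f v ∧ ∀ w ≠ v, 1 ≤ f w → f w < G.dist u w) :
    MinimalDominatingBroadcast G f := by
  refine ⟨hb, hd, fun g _ hgf hne hgd => ?_⟩
  obtain ⟨v, hv⟩ := Function.ne_iff.mp hne
  have hlt : g v < f v := lt_of_le_of_ne (hgf v) hv
  obtain ⟨u, huv, hpu⟩ := hpriv v (by omega)
  obtain ⟨w, hw, huw⟩ := hgd u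
  rcases eq_or_ne w v with rfl | hwv
  · omega
  · have : g w ≤ f w := hgf w
    have := hpu w hwv (hw.trans this)
    omega

lemma minimalDominatingBroadcast_pi_single [DecidableEq V] (v : V) (hv : 1 ≤ _root_.eccent G v) :
    MinimalDominatingBroadcast G (Pi.single v (_root_.eccent G v)) := by
  refine minimalDominatingBroadcast_of_private_boundary (fun w => ?_)
    (fun u => ⟨v, by simpa using hv, by simpa using dist_le_eccent G u v⟩) (fun w hw => ?_)
  · rcases eq_or_ne w v with rfl | hwv <;> simp [*]
  · obtain rfl : w = v := by by_contra h; simp [h] at hw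
    obtain ⟨u, hu⟩ := exists_dist_eq_eccent G w
    exact ⟨u, by simpa using hu, fun x hx h => by simp [hx] at h⟩

lemma minimalDominatingBroadcast_pi_single_add_pi_single [DecidableEq V] {p q : V} (hpq : p ≠ q)
    {a b : ℕ} (ha : 1 ≤ a) (hb : 1 ≤ b) (hap : a ≤ _root_.eccent G p)
    (hbq : b ≤ _root_.eccent G q) (hdom : ∀ u, G.dist u p ≤ a ∨ G.dist u q ≤ b)
    (hx : ∃ x, G.dist x p = a ∧ b < G.dist x q) (hy : ∃ y, G.dist y q = b ∧ a < G.dist y p) :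
    MinimalDominatingBroadcast G (Pi.single p a + Pi.single q b) := by
  have hfp : (Pi.single p a + Pi.single q b : V → ℕ) p = a := by simp [hpq]
  have hfq : (Pi.single p a + Pi.single q b : V → ℕ) q = b := by simp [hpq.symm]
  have hf0 : ∀ w, w ≠ p → w ≠ q → (Pi.single p a + Pi.single q b : V → ℕ) w = 0 := by
    intro w hwp hwq
    simp [hwp, hwq]
  refine minimalDominatingBroadcast_of_private_boundary (fun w => ?_) (fun u => ?_) (fun w hw => ?_)
  · rcases eq_or_ne w p with rfl | hwp
    · omega
    rcases eq_or_ne w q with rfl | hwq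
    · omega
    · simp [hf0 w hwp hwq]
  · rcases hdom u with h | h
    · exact ⟨p, by omega, by omega⟩
    · exact ⟨q, by omega, by omega⟩
  · have hw' : w = p ∨ w = q := by
      by_contra! h
      simp [hf0 w h.1 h.2] at hw
    rcases hw' with rfl | rfl
    · obtain ⟨x, hxp, hxq⟩ := hx
      refine ⟨x, by omega, fun z hz hzf => ?_⟩
      obtain rfl : z = q := by by_contra h; simp [hf0 z hz h] at hzf
      omega
    · obtain ⟨y, hyq, hyp⟩ := hy
      refine ⟨y, by omega, fun z hz hzf => ?_⟩
      obtain rfl : z = p := by by_contra h; simp [hf0 z h hz] at hzf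
      omega

lemma bddAbove_minimalDominatingBroadcast_costs :
    BddAbove {k | ∃ f : V → ℕ, MinimalDominatingBroadcast G f ∧ cost f = k} :=
  ⟨∑ v, _root_.eccent G v, by
    rintro k ⟨f, hf, rfl⟩
    exact cost_le_sum_eccent hf.1⟩

lemma gDiam_le_upperBroadcast : gDiam G ≤ upperBroadcast G := by
  classical
  rcases Nat.eq_zero_or_pos (gDiam G) with h | h
  · omega
  obtain ⟨v, -, hv⟩ := exists_mem_eq_sup univ (nonempty_of_ne_empty (by
    rintro he; simp [gDiam, he] at h)) (fun v => _root_.eccent G v)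
  rw [gDiam, hv] at h ⊢
  exact le_csSup bddAbove_minimalDominatingBroadcast_costs
    ⟨_, minimalDominatingBroadcast_pi_single v h, cost_pi_single v _⟩

theorem upperBroadcast_eq_gDiam_iff :
    upperBroadcast G = gDiam G ↔ ∀ f, MinimalDominatingBroadcast G f → cost f ≤ gDiam G := by
  refine ⟨fun h f hf => h ▸ le_csSup bddAbove_minimalDominatingBroadcast_costs ⟨f, hf, rfl⟩,
    fun h => le_antisymm (csSup_le' ?_) gDiam_le_upperBroadcast⟩
  rintro k ⟨f, hf, rfl⟩
  exact h f hf

end Broadcast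

lemma SimpleGraph.Reachable.le_dist_add_of_forall_adj_le {V : Type*} {G : SimpleGraph V}
    {u v : V} (h : G.Reachable u v) (φ : V → ℕ) (hφ : ∀ x y, G.Adj x y → φ x ≤ φ y + 1) :
    φ u ≤ G.dist u v + φ v := by
  obtain ⟨p, hp⟩ := h.exists_walk_length_eq_dist
  rw [← hp]
  clear hp h
  induction p with
  | nil => simp
  | cons hadj _ ih =>
    rw [Walk.length_cons]
    have := hφ _ _ hadj
    omega

lemma Fin.val_sub_eq_ite {n : ℕ} (a b : Fin n) :
    (a - b).val = if b.val ≤ a.val then a.val - b.val else n + a.val - b.val := by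
  split_ifs with h
  · exact Fin.coe_sub_iff_le.mpr h
  · exact Fin.coe_sub_iff_lt.mpr (by omega)

section Cycle

variable {n : ℕ} [NeZero n]

lemma cycleGraph_connected_of_neZero : (cycleGraph n).Connected := by
  obtain ⟨m, rfl⟩ := Nat.exists_eq_succ_of_ne_zero (NeZero.ne n)
  exact cycleGraph_connected

lemma cycleGraph_dist_add_one_le (w : Fin n) : (cycleGraph n).dist w (w + 1) ≤ 1 := by
  rcases eq_or_ne (w + 1) w with h | h
  · simp [h]
  · have hn : n ≠ 1 := by
      rintro rfl
      exact h (Subsingleton.elim _ _)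
    refine (dist_eq_one_iff_adj.mpr (cycleGraph_adj'.mpr (Or.inr ?_))).le
    rw [add_sub_cancel_left, Fin.val_one', Nat.one_mod_eq_one.mpr hn]

lemma cycleGraph_dist_le_val_sub (u v : Fin n) : (cycleGraph n).dist u v ≤ (v - u).val := by
  induction hk : (v - u).val generalizing v with
  | zero => simp [sub_eq_zero.mp (Fin.ext hk)]
  | succ k ih =>
    have hone : (1 : Fin n).val = 1 := by
      rw [Fin.val_one', Nat.one_mod_eq_one]
      have := (v - u).isLt
      omega
    have hw : (v - 1 - u).val = k := by
      rw [sub_right_comm, Fin.val_sub_eq_ite, hk, hone]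
      simp
    have := cycleGraph_connected_of_neZero.dist_triangle (u := u) (v := v - 1) (w := v)
    have := cycleGraph_dist_add_one_le (v - 1)
    rw [sub_add_cancel] at this
    have := ih (v - 1) hw
    omega

theorem cycleGraph_dist (u v : Fin n) :
    (cycleGraph n).dist u v = min (v - u).val (n - (v - u).val) := by
  refine le_antisymm ?_ ?_
  · have h₁ := cycleGraph_dist_le_val_sub u v
    have h₂ := cycleGraph_dist_le_val_sub v u
    rw [SimpleGraph.dist_comm] at h₂
    simp only [Fin.val_sub_eq_ite] at *
    split_ifs at * <;> omega
  · have := (cycleGraph_connected_of_neZero.preconnected u v).le_dist_add_of_forall_adj_le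
      (fun x => min (v - x).val (n - (v - x).val)) fun x y hxy => by
        rw [cycleGraph_adj'] at hxy
        simp only [Fin.val_sub_eq_ite] at *
        split_ifs at * <;> omega
    simpa using this

theorem cycleGraph_eccent (v : Fin n) : _root_.eccent (cycleGraph n) v = n / 2 := by
  refine le_antisymm (Finset.sup_le fun u _ => ?_) ?_
  · rw [cycleGraph_dist]
    omega
  · have := dist_le_eccent (cycleGraph n) (v + ⟨n / 2, by have := NeZero.pos n; omega⟩) v
    rw [SimpleGraph.dist_comm, cycleGraph_dist, add_sub_cancel_left, Fin.val_mk] at this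
    omega

theorem cycleGraph_gDiam : gDiam (cycleGraph n) = n / 2 := by
  rw [gDiam, Finset.sup_congr rfl fun v _ => cycleGraph_eccent v]
  exact sup_const univ_nonempty _

end Cycle

/-- Among any three vertices of `C₄` or `C₅` two are at distance two, and their closed
neighbourhoods cover the cycle. -/
lemma cycleGraph_exists_redundant {n : ℕ} (hn : n = 4 ∨ n = 5) :
    ∀ S : Finset (Fin n), 3 ≤ #S →
      ∃ z ∈ S, ∀ u, ∃ w ∈ S, w ≠ z ∧ (u = w ∨ (cycleGraph n).Adj u w) := by
  rcases hn with rfl | rfl <;> decide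

lemma cycleGraph_card_broadcasters_le_two {n : ℕ} (hn : n = 4 ∨ n = 5) {f : Fin n → ℕ}
    (hf : MinimalDominatingBroadcast (cycleGraph n) f) : #{v | 1 ≤ f v} ≤ 2 := by
  by_contra! h
  obtain ⟨z, hz, hcover⟩ := cycleGraph_exists_redundant hn _ h
  refine hf.not_dominates_update_zero (mem_filter.mp hz).2 fun u => ?_
  obtain ⟨w, hw, hwz, huw⟩ := hcover u
  have hfw := (mem_filter.mp hw).2
  refine ⟨w, by simpa [hwz] using hfw, ?_⟩
  rw [update_of_ne hwz]
  rcases huw with rfl | hadj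
  · simp
  · rw [dist_eq_one_iff_adj.mpr hadj]
    exact hfw

lemma cycleGraph_cost_le_of_le_five {n : ℕ} (hn : n = 3 ∨ n = 4 ∨ n = 5) {f : Fin n → ℕ}
    (hf : MinimalDominatingBroadcast (cycleGraph n) f) : cost f ≤ n / 2 := by
  have : NeZero n := ⟨by omega⟩
  by_cases hbig : ∃ v, n / 2 ≤ f v
  · obtain ⟨v, hv⟩ := hbig
    rw [← cycleGraph_eccent v] at hv ⊢
    exact (hf.cost_eq_eccent (by rw [cycleGraph_eccent]; omega) hv).le
  push Not at hbig
  obtain ⟨v, hv, -⟩ := hf.2.1 0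
  have h45 : n = 4 ∨ n = 5 := by
    have := hbig v
    omega
  calc cost f ≤ #{v | 1 ≤ f v} := cost_le_card_of_le_one fun v => by have := hbig v; omega
    _ ≤ 2 := cycleGraph_card_broadcasters_le_two h45 hf
    _ = n / 2 := by omega

lemma cycleGraph_exists_minimalDominatingBroadcast_cost_gt {n : ℕ} (hn : 6 ≤ n) :
    ∃ f, MinimalDominatingBroadcast (cycleGraph n) f ∧ n / 2 < cost f := by
  have : NeZero n := ⟨by omega⟩
  let p : Fin n := ⟨0, by omega⟩
  let q : Fin n := ⟨n % 2 + 1, by omega⟩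
  have hpq : p ≠ q := by simp [p, q, Fin.ext_iff]
  refine ⟨Pi.single p (n / 2 - 1) + Pi.single q (n / 2 - 1),
    minimalDominatingBroadcast_pi_single_add_pi_single hpq (by omega) (by omega)
      (by rw [cycleGraph_eccent]; omega) (by rw [cycleGraph_eccent]; omega) (fun u => ?_)
      ⟨⟨n / 2 + n % 2 + 1, by omega⟩, ?_⟩ ⟨⟨n / 2 + n % 2, by omega⟩, ?_⟩,
    by rw [cost_add, cost_pi_single, cost_pi_single]; omega⟩
  all_goals
    simp only [cycleGraph_dist, Fin.val_sub_eq_ite, p, q]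
    split_ifs <;> omega

/-- For `n ≥ 3`, the cycle `C_n` is diametrical iff `n = 3`, `n = 4`, or `n = 5`. -/
theorem cycle_diametrical_iff (n : ℕ) (hn : 3 ≤ n) :
    upperBroadcast (cycleGraph n) = gDiam (cycleGraph n) ↔ n = 3 ∨ n = 4 ∨ n = 5 := by
  have : NeZero n := ⟨by omega⟩
  rw [upperBroadcast_eq_gDiam_iff, cycleGraph_gDiam]
  refine ⟨fun h => ?_, fun h f hf => cycleGraph_cost_le_of_le_five h hf⟩
  by_contra hbig
  obtain ⟨f, hf, hcost⟩ := cycleGraph_exists_minimalDominatingBroadcast_cost_gt (n := n) (by omega)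
  exact absurd (h f hf) (by omega)
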